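/- arXiv:2304.04490 — 4 statements merged into one kernel-verified Lean document; each statement's English description precedes it below -/
import Mathlib

section
/- Let (R, m) be a commutative Noetherian local ring and let I be a proper ideal of R containing a non zero-divisor on R. Then I can be generated by elements each of which is a non zero-divisor on R. -/
universe u
open TensorProduct

variable (R : Type u) [CommRing R]

/-- Projective dimension at most `n`. -/
def pdLE (R : Type u) [CommRing R] :
    ℕ → ∀ (M : Type u) [AddCommGroup M] [Module R M], Prop
  | 0, M, _, _ => Module.Projective R M
  | n+1, M, _, _ => Module.Projective R M ∨
      ∃ (F : Type u) (_ : AddCommGroup F) (_ : Module R F) (f : F →ₗ[R] M),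
        Module.Projective R F ∧ Function.Surjective f ∧
          pdLE R n (LinearMap.ker f)

/-- Injective dimension at most `n`. -/
def idLE (R : Type u) [CommRing R] :
    ℕ → ∀ (M : Type u) [AddCommGroup M] [Module R M], Prop
  | 0, M, _, _ => Module.Injective R M
  | n+1, M, _, _ => Module.Injective R M ∨
      ∃ (I : Type u) (_ : AddCommGroup I) (_ : Module R I) (f : M →ₗ[R] I),
        Module.Injective R I ∧ Function.Injective f ∧
          idLE R n (I ⧸ LinearMap.range f)

/-- `Tor_i^R(M,N)` vanishes. -/
abbrev TorVanish (i : ℕ) (M N : Type u) [AddCommGroup M] [Module R M]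
    [AddCommGroup N] [Module R N] : Prop :=
  Subsingleton (((CategoryTheory.Tor (ModuleCat.{u} R) i).obj
      (ModuleCat.of R M)).obj (ModuleCat.of R N))

/-- `Ext^i_R(M,N)` vanishes. -/
abbrev ExtVanish (i : ℕ) (M N : Type u) [AddCommGroup M] [Module R M]
    [AddCommGroup N] [Module R N] : Prop :=
  Subsingleton (((Ext R (ModuleCat.{u} R) i).obj
      (Opposite.op (ModuleCat.of R M))).obj (ModuleCat.of R N))

/-- depth of the module `M` (w.r.t. ideal `J`) is at least `n`. -/
def depthGE (J : Ideal R) (n : ℕ) (M : Type u) [AddCommGroup M] [Module R M] : Prop :=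
  ∃ rs : List R, rs.length = n ∧ (∀ x ∈ rs, x ∈ J) ∧ RingTheory.Sequence.IsRegular M rs

/-- maximal Cohen-Macaulay module over a local ring -/
def IsMaximalCM [IsLocalRing R] (M : Type u) [AddCommGroup M] [Module R M] : Prop :=
  ∃ rs : List R, (∀ x ∈ rs, x ∈ IsLocalRing.maximalIdeal R) ∧
    RingTheory.Sequence.IsRegular M rs ∧ (rs.length : WithBot (WithTop ℕ)) = ringKrullDim R

def IsCMLocalRing [IsLocalRing R] : Prop := IsMaximalCM R R

/-- regular local ring: maximal ideal generated by a regular sequence -/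
def IsRegularLocalRing' [IsLocalRing R] : Prop :=
  ∃ rs : List R, RingTheory.Sequence.IsRegular R rs ∧
    Ideal.span {x | x ∈ rs} = IsLocalRing.maximalIdeal R

/-- canonical module of a Cohen-Macaulay local ring -/
def IsCanonicalModule [IsLocalRing R] (ω : Type u) [AddCommGroup ω] [Module R ω] : Prop :=
  Module.Finite R ω ∧ IsMaximalCM R ω ∧ (∃ n, idLE R n ω) ∧
    Function.Bijective (algebraMap R (Module.End R ω))

/-! The zero-divisors of a Noetherian ring are the union of its finitely many associated primes.
Fix a regular `x ∈ I`. For `a ∈ I`, if all of `a + x, a + x², …` were zero-divisors, two of them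
would lie in a common associated prime `P`, and then so would
`x ^ m - x ^ n = x ^ m (1 - x ^ (n - m))`; but `x ∉ P` because `x` is regular, and
`1 - x ^ (n - m)` is a unit because `x` lies in the maximal ideal. So some `a + x ^ n` is regular,
and `a = (a + x ^ n) - x ^ n` is a difference of regular elements of `I`. -/

open Ideal

section AssociatedPrimes

variable {R M : Type*} [CommRing R] [AddCommGroup M] [Module R M] [IsNoetherianRing R]

lemma exists_mem_associatedPrimes_of_not_isSMulRegular {r : R} (hr : ¬IsSMulRegular M r) :
    ∃ P ∈ associatedPrimes R M, r ∈ P := by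
  have hmem : r ∈ ⋃ P ∈ associatedPrimes R M, (P : Set R) := by
    rw [biUnion_associatedPrimes_eq_compl_regular]
    exact hr
  simpa using hmem

lemma IsSMulRegular.notMem_of_mem_associatedPrimes {r : R} (hr : IsSMulRegular M r)
    {P : Ideal R} (hP : P ∈ associatedPrimes R M) : r ∉ P := fun hrP => by
  have hmem : r ∈ ⋃ P ∈ associatedPrimes R M, (P : Set R) := Set.mem_biUnion hP hrP
  rw [biUnion_associatedPrimes_eq_compl_regular] at hmem
  exact hmem hr

end AssociatedPrimes

lemma Ideal.IsPrime.pow_sub_pow_notMem_of_mem_jacobson {R : Type*} [CommRing R] {P : Ideal R}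
    (hP : P.IsPrime) {x : R} (hxP : x ∉ P) (hx : x ∈ jacobson (⊥ : Ideal R)) {m n : ℕ}
    (hmn : m < n) : x ^ m - x ^ n ∉ P := by
  have hunit : IsUnit (x * -x ^ (n - m - 1) + 1) := mem_jacobson_bot.mp hx _
  have hfactor : x ^ m - x ^ n = x ^ m * (x * -x ^ (n - m - 1) + 1) := by
    obtain ⟨k, rfl⟩ := Nat.exists_eq_add_of_lt hmn
    rw [show m + k + 1 - m - 1 = k by omega]
    ring
  rw [hfactor]
  rintro (hmem : _ ∈ P)
  rcases hP.mem_or_mem hmem with hxm | hu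
  · exact hxP (hP.mem_of_pow_mem m hxm)
  · exact hP.ne_top (P.eq_top_of_isUnit_mem hu hunit)

theorem exists_isSMulRegular_add_pow {R M : Type*} [CommRing R] [IsNoetherianRing R]
    [AddCommGroup M] [Module R M] [Module.Finite R M] {x : R} (hx : IsSMulRegular M x)
    (hxJ : x ∈ jacobson (⊥ : Ideal R)) (a : R) : ∃ n, 0 < n ∧ IsSMulRegular M (a + x ^ n) := by
  by_contra! h
  choose P hP haP using fun n : ℕ =>
    exists_mem_associatedPrimes_of_not_isSMulRegular (h (n + 1) n.succ_pos)
  refine (associatedPrimes.finite R M).not_infinite (Set.infinite_of_injective_forall_mem ?_ hP)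
  intro m n hPmn
  by_contra hne
  wlog hlt : m < n generalizing m n
  · exact this hPmn.symm (Ne.symm hne) (by omega)
  refine (hP n).isPrime.pow_sub_pow_notMem_of_mem_jacobson
    (hx.notMem_of_mem_associatedPrimes (hP n)) hxJ (Nat.add_lt_add_right hlt 1) ?_
  convert sub_mem (hPmn ▸ haP m) (haP n) using 1
  abel

theorem Ideal.span_setOf_mem_and_isSMulRegular {R : Type*} [CommRing R] [IsNoetherianRing R]
    (I : Ideal R) {x : R} (hxI : x ∈ I) (hx : IsSMulRegular R x)
    (hxJ : x ∈ jacobson (⊥ : Ideal R)) : span {y | y ∈ I ∧ IsSMulRegular R y} = I := by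
  refine le_antisymm (span_le.mpr fun y hy => hy.1) fun a ha => ?_
  obtain ⟨n, hn, hreg⟩ := exists_isSMulRegular_add_pow hx hxJ a
  have hxn : x ^ n ∈ I := I.pow_mem_of_mem hxI n hn
  have hsum : a + x ^ n ∈ span {y | y ∈ I ∧ IsSMulRegular R y} :=
    subset_span ⟨I.add_mem ha hxn, hreg⟩
  have hpow : x ^ n ∈ span {y | y ∈ I ∧ IsSMulRegular R y} := subset_span ⟨hxn, hx.pow n⟩
  simpa using sub_mem hsum hpow

/-- A proper ideal of a Noetherian local ring containing a non zero-divisor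
can be generated by non zero-divisors. -/
theorem stmt_1 (R : Type u) [CommRing R] [IsNoetherianRing R] [IsLocalRing R]
    (I : Ideal R) (hI : I ≠ ⊤) (h : ∃ x ∈ I, IsSMulRegular R x) :
    ∃ S : Set R, (∀ x ∈ S, IsSMulRegular R x) ∧ Ideal.span S = I := by
  obtain ⟨x, hxI, hx⟩ := h
  have hxJ : x ∈ jacobson (⊥ : Ideal R) := by
    rw [IsLocalRing.jacobson_eq_maximalIdeal ⊥ bot_ne_top]
    exact IsLocalRing.le_maximalIdeal hI hxI
  exact ⟨_, fun _ hy => hy.2, I.span_setOf_mem_and_isSMulRegular hxI hx hxJ⟩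
end

section
/- Let (R, m) be a commutative Noetherian local ring and x ∈ m a nonzero element. Then pd_R(R/xR) < ∞ if and only if x is a non zero-divisor on R. -/
universe u
open TensorProduct

variable (R : Type u) [CommRing R]

/-
If `pd_R(R/xR) < ∞`, then `R/xR` has a finite free resolution; let `χ` be its Euler
characteristic. Localizing at an associated prime `p` of `R` gives a local ring `R_p` whose
maximal ideal is killed by some `z ≠ 0`. Over such a ring an injective map out of a free module
stays injective modulo the maximal ideal, so every module with a finite free resolution is free,
and `(R/xR)_p` is free of rank `χ`. If `χ = 0`, then `(R/xR)_p = 0`, i.e. `x ∉ p`, for every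
associated prime `p`, so `x` is a non zero-divisor. If `χ ≠ 0`, then `x` kills a nonzero free
`R_p`-module, so `x/1 = 0` in `R_p`, which fails for an associated prime `p ⊇ ann(x)`.
Conversely, for regular `x` the sequence `0 → R → R → R/xR → 0` is a projective resolution.
-/

open CategoryTheory IsLocalRing LinearMap Module

section ProjectiveDimension

variable {R : Type u} [CommRing R]

theorem hasProjectiveDimensionLE_of_pdLE : ∀ (n : ℕ) {M : Type u} [AddCommGroup M] [Module R M],
    pdLE R n M → HasProjectiveDimensionLE (ModuleCat.of R M) n
  | 0, M, _, _, h =>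
    projective_iff_hasProjectiveDimensionLT_one.mp ((IsProjective.iff_projective M).mp h)
  | n + 1, M, _, _, h => by
    rcases h with hM | ⟨F, _, _, f, hF, hf, hker⟩
    · have := hasProjectiveDimensionLE_of_pdLE 0 hM
      exact hasProjectiveDimensionLT_of_ge _ 1 (n + 2) (by omega)
    · have := (IsProjective.iff_projective F).mp hF
      exact (shortExact_shortComplexKer hf).hasProjectiveDimensionLT_X₃ (n + 1)
        (hasProjectiveDimensionLE_of_pdLE n hker)
        (hasProjectiveDimensionLT_of_ge _ 1 (n + 2) (by omega))

theorem pdLE_one_quotient_span_singleton {x : R} (hx : IsSMulRegular R x) :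
    pdLE R 1 (R ⧸ Ideal.span {x}) := by
  refine Or.inr ⟨R, _, _, (Ideal.span {x}).mkQ, inferInstance, Submodule.mkQ_surjective _, ?_⟩
  have hinj : Function.Injective (toSpanSingleton R R x) := fun a b hab => by
    apply hx
    simpa [mul_comm x] using hab
  have e : R ≃ₗ[R] ker (Ideal.span {x}).mkQ :=
    (LinearEquiv.ofInjective _ hinj).trans (LinearEquiv.ofEq _ _ (by
      rw [Submodule.ker_mkQ, ← span_singleton_eq_range]))
  exact Projective.of_equiv e

end ProjectiveDimension

section DepthZero

variable {A : Type u} [CommRing A] {M : Type u} [AddCommGroup M] [Module A M]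

theorem smul_eq_zero_of_mem_smul_top {I : Ideal A} {z : A} (hz : ∀ a ∈ I, z * a = 0) {w : M}
    (hw : w ∈ I • (⊤ : Submodule A M)) : z • w = 0 :=
  Submodule.smul_induction_on hw (fun a ha m _ => by rw [smul_smul, hz a ha, zero_smul])
    (fun _ _ h₁ h₂ => by rw [smul_add, h₁, h₂, add_zero])

theorem mem_maximalIdeal_smul_top_of_smul_eq_zero [IsLocalRing A] [Module.Free A M] {z : A}
    (hz : z ≠ 0) {v : M} (hv : z • v = 0) : v ∈ maximalIdeal A • (⊤ : Submodule A M) := by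
  let b := Module.Free.chooseBasis A M
  rw [← b.span_eq, Submodule.mem_ideal_smul_span_iff_exists_sum]
  refine ⟨b.repr v, fun i => ?_, b.linearCombination_repr v⟩
  have hzi : z * b.repr v i = 0 := by simpa using congr($(congrArg b.repr hv) i)
  exact (mem_maximalIdeal _).mpr fun hu => hz (hu.mul_left_eq_zero.mp hzi)

theorem lTensor_residueField_injective_of_mul_maximalIdeal_eq_zero [IsLocalRing A]
    {N : Type u} [AddCommGroup N] [Module A N] [Module.Free A M] {φ : M →ₗ[A] N}
    (hφ : Function.Injective φ) {z : A} (hz : z ≠ 0) (hzm : ∀ a ∈ maximalIdeal A, z * a = 0) :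
    Function.Injective (φ.lTensor (ResidueField A)) := by
  refine (injective_iff_map_eq_zero _).mpr fun t ht => ?_
  obtain ⟨v, rfl⟩ := TensorProduct.mk_surjective A M (ResidueField A) residue_surjective t
  have hφv : φ v ∈ maximalIdeal A • (⊤ : Submodule A N) := by
    rw [← ker_tensorProductMk]
    simpa using! ht
  have hzv : z • v = 0 := hφ (by simpa using smul_eq_zero_of_mem_smul_top hzm hφv)
  have := mem_maximalIdeal_smul_top_of_smul_eq_zero hz hzv
  rwa [← ker_tensorProductMk] at this

end DepthZero

/-- `HasFiniteFreeResolution A n M χ`: there is an exact sequence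
`0 → Fₙ → ⋯ → F₀ → M → 0` of finite free `A`-modules with `∑ (-1)ⁱ rank Fᵢ = χ`. -/
def HasFiniteFreeResolution (A : Type u) [CommRing A] :
    ℕ → ∀ (M : Type u) [AddCommGroup M] [Module A M], ℤ → Prop
  | 0, M, _, _, χ => Module.Free A M ∧ Module.Finite A M ∧ χ = finrank A M
  | n + 1, M, _, _, χ => ∃ (F : Type u) (_ : AddCommGroup F) (_ : Module A F)
      (_ : Module.Free A F) (_ : Module.Finite A F) (f : F →ₗ[A] M),
      Function.Surjective f ∧ HasFiniteFreeResolution A n (ker f) (finrank A F - χ)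

namespace HasFiniteFreeResolution

variable {A : Type u} [CommRing A]

theorem of_linearEquiv : ∀ {n : ℕ} {M N : Type u} [AddCommGroup M] [Module A M]
    [AddCommGroup N] [Module A N] {χ : ℤ} (_ : M ≃ₗ[A] N),
    HasFiniteFreeResolution A n M χ → HasFiniteFreeResolution A n N χ
  | 0, _, _, _, _, _, _, _, e, ⟨_, _, hχ⟩ => ⟨.of_equiv e, .equiv e, e.finrank_eq ▸ hχ⟩
  | _ + 1, _, _, _, _, _, _, _, e, ⟨F, _, _, _, _, f, hf, hK⟩ =>
    ⟨F, _, _, ‹_›, ‹_›, e ∘ₗ f, e.surjective.comp hf,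
      hK.of_linearEquiv (LinearEquiv.ofEq _ _ (e.ker_comp f).symm)⟩

theorem baseChange (B : Type u) [CommRing B] [Algebra A B] [Flat A B] [Nontrivial A]
    [Nontrivial B] : ∀ {n : ℕ} {M : Type u} [AddCommGroup M] [Module A M] {χ : ℤ},
    HasFiniteFreeResolution A n M χ → HasFiniteFreeResolution B n (B ⊗[A] M) χ
  | 0, _, _, _, _, ⟨_, _, hχ⟩ =>
    ⟨inferInstance, inferInstance, by rw [finrank_baseChange]; exact hχ⟩
  | _ + 1, _, _, _, _, ⟨F, _, _, _, _, f, hf, hK⟩ =>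
    ⟨B ⊗[A] F, _, _, inferInstance, inferInstance,
      TensorProduct.AlgebraTensorModule.lTensor B B f, lTensor_surjective B hf, by
        rw [finrank_baseChange]
        exact (hK.baseChange B).of_linearEquiv (tensorKerEquiv B B f)⟩

theorem free [IsLocalRing A] {z : A} (hz : z ≠ 0) (hzm : ∀ a ∈ maximalIdeal A, z * a = 0) :
    ∀ {n : ℕ} {M : Type u} [AddCommGroup M] [Module A M] {χ : ℤ},
    HasFiniteFreeResolution A n M χ → Module.Free A M ∧ Module.Finite A M ∧ χ = finrank A M
  | 0, _, _, _, _, h => h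
  | _ + 1, M, _, _, χ, ⟨F, _, _, _, _, f, hf, hK⟩ => by
    obtain ⟨_, _, hχK⟩ := free hz hzm hK
    have : Module.Finite A M := .of_surjective f hf
    have : Module.Free A M := free_of_lTensor_residueField_injective (ker f).subtype f hf
      (exact_subtype_ker_map f)
      (lTensor_residueField_injective_of_mul_maximalIdeal_eq_zero (ker f).injective_subtype hz hzm)
    obtain ⟨σ, hσ⟩ := projective_lifting_property f LinearMap.id hf
    have hrank := ((exact_subtype_ker_map f).splitSurjectiveEquiv (ker f).injective_subtype
      ⟨σ, hσ⟩).1.finrank_eq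
    rw [finrank_prod] at hrank
    exact ⟨this, inferInstance, by omega⟩

end HasFiniteFreeResolution

section

variable {R : Type u} [CommRing R]

theorem exists_hasFiniteFreeResolution_of_hasProjectiveDimensionLE [IsNoetherianRing R]
    [IsLocalRing R] : ∀ (n : ℕ) {M : Type u} [AddCommGroup M] [Module R M] [Module.Finite R M],
    HasProjectiveDimensionLE (ModuleCat.of R M) n → ∃ χ, HasFiniteFreeResolution R n M χ
  | 0, M, _, _, _, h => by
    have : Module.Projective R M :=
      (IsProjective.iff_projective M).mpr (projective_iff_hasProjectiveDimensionLT_one.mpr h)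
    exact ⟨_, free_of_flat_of_isLocalRing, inferInstance, rfl⟩
  | n + 1, M, _, _, _, h => by
    obtain ⟨a, f, hf⟩ := Module.Finite.exists_fin' R M
    have : HasProjectiveDimensionLE (ModuleCat.of R (ker f)) n :=
      (shortExact_shortComplexKer hf).hasProjectiveDimensionLT_X₁ (n + 1)
        (hasProjectiveDimensionLT_of_ge _ 1 (n + 1) (by omega)) h
    obtain ⟨χ, hχ⟩ := exists_hasFiniteFreeResolution_of_hasProjectiveDimensionLE n this
    exact ⟨a - χ, Fin a → R, _, _, inferInstance, inferInstance, f, hf, by simpa using hχ⟩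

theorem exists_ne_zero_forall_mul_maximalIdeal_eq_zero_of_mem_associatedPrimes
    [IsNoetherianRing R] {p : Ideal R} [p.IsPrime] (hp : p ∈ associatedPrimes R R) :
    ∃ z : Localization.AtPrime p, z ≠ 0 ∧
      ∀ a ∈ maximalIdeal (Localization.AtPrime p), z * a = 0 := by
  have hm :=
    Module.associatedPrimes.mem_associatedPrimes_of_comap_mem_associatedPrimes_of_isLocalizedModule
    (R' := Localization.AtPrime p) (M' := Localization.AtPrime p) p.primeCompl
    (Algebra.linearMap R (Localization.AtPrime p)) (maximalIdeal _)
    (by rwa [← Ideal.under_def, Localization.AtPrime.under_maximalIdeal])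
  obtain ⟨-, z, hz⟩ := isAssociatedPrime_iff.mp hm
  refine ⟨z, fun h0 => (maximalIdeal.isMaximal (Localization.AtPrime p)).ne_top ?_,
    fun a ha => ?_⟩
  · simp [hz, h0]
  · simpa [mul_comm] using
      Submodule.mem_colon_singleton.mp (hz ▸ ha : a ∈ (⊥ : Ideal _).colon {z})

theorem HasFiniteFreeResolution.free_localizedModule [IsNoetherianRing R] {n : ℕ} {M : Type u}
    [AddCommGroup M] [Module R M] {χ : ℤ} (h : HasFiniteFreeResolution R n M χ) {p : Ideal R}
    [p.IsPrime] (hp : p ∈ associatedPrimes R R) :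
    Module.Free (Localization.AtPrime p) (LocalizedModule p.primeCompl M) ∧
      Module.Finite (Localization.AtPrime p) (LocalizedModule p.primeCompl M) ∧
      χ = finrank (Localization.AtPrime p) (LocalizedModule p.primeCompl M) := by
  have := (algebraMap R (Localization.AtPrime p)).domain_nontrivial
  obtain ⟨z, hz, hzm⟩ :=
    exists_ne_zero_forall_mul_maximalIdeal_eq_zero_of_mem_associatedPrimes hp
  refine ((h.baseChange _).of_linearEquiv ?_).free hz hzm
  exact (IsLocalizedModule.isBaseChange p.primeCompl _ (LocalizedModule.mkLinearMap _ M)).equiv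

theorem nontrivial_localizedModule_quotient_iff (I p : Ideal R) [p.IsPrime] :
    Nontrivial (LocalizedModule p.primeCompl (R ⧸ I)) ↔ I ≤ p := by
  have := Module.mem_support_iff_of_finite (M := R ⧸ I) (p := ⟨p, ‹_›⟩)
  rwa [Ideal.annihilator_quotient] at this

theorem algebraMap_eq_zero_of_mem_annihilator (S : Submonoid R) {M : Type u} [AddCommGroup M]
    [Module R M] [Module.Free (Localization S) (LocalizedModule S M)]
    [Nontrivial (LocalizedModule S M)] {r : R} (hr : r ∈ Module.annihilator R M) :
    algebraMap R (Localization S) r = 0 := by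
  suffices algebraMap R (Localization S) r ∈
      Module.annihilator (Localization S) (LocalizedModule S M) by
    rwa [annihilator_eq_bot.mpr inferInstance] at this
  refine Module.mem_annihilator.mpr fun m => ?_
  induction m using LocalizedModule.induction_on with
  | h m s => rw [algebraMap_smul, LocalizedModule.smul'_mk, Module.mem_annihilator.mp hr,
      LocalizedModule.zero_mk]

theorem isSMulRegular_of_hasFiniteFreeResolution_quotient [IsNoetherianRing R] {x : R} (hx : x ≠ 0) {n : ℕ} {χ : ℤ}
    (h : HasFiniteFreeResolution R n (R ⧸ Ideal.span {x}) χ) : IsSMulRegular R x := by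
  have hmem : ∀ p ∈ associatedPrimes R R, x ∈ p ↔ χ ≠ 0 := fun p hp => by
    have := hp.isPrime
    obtain ⟨_, _, hχ⟩ := h.free_localizedModule hp
    rw [← Ideal.span_singleton_le_iff_mem, ← nontrivial_localizedModule_quotient_iff,
      ← not_subsingleton_iff_nontrivial, ← finrank_eq_zero_iff_of_free (Localization.AtPrime p)]
    omega
  rcases eq_or_ne χ 0 with rfl | hχ
  · refine Flat.isSMulRegular_of_nonZeroDivisors ?_
    rw [← SetLike.mem_coe, ← Set.notMem_compl_iff,
      ← biUnion_associatedPrimes_eq_compl_nonZeroDivisors]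
    simpa using fun p hp => (hmem p hp).mp
  · obtain ⟨p, hp, hle⟩ := exists_le_isAssociatedPrime_of_isNoetherianRing R x hx
    have := hp.isPrime
    obtain ⟨_, _, -⟩ := h.free_localizedModule hp
    have := (nontrivial_localizedModule_quotient_iff _ p).mpr
      ((Ideal.span_singleton_le_iff_mem p).mpr ((hmem p hp).mpr hχ))
    obtain ⟨u, hu⟩ := (IsLocalization.map_eq_zero_iff p.primeCompl _ x).mp
      (algebraMap_eq_zero_of_mem_annihilator p.primeCompl
        (Ideal.annihilator_quotient (I := Ideal.span {x}) ▸ Ideal.mem_span_singleton_self x))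
    exact absurd (hle (Submodule.mem_colon_singleton.mpr (by simpa using hu))) u.2

end

theorem stmt_5_general (R : Type u) [CommRing R] [IsNoetherianRing R] [IsLocalRing R]
    (x : R) (hx0 : x ≠ 0) :
    (∃ n, pdLE R n (R ⧸ Ideal.span {x})) ↔ IsSMulRegular R x := by
  constructor
  · rintro ⟨n, hn⟩
    obtain ⟨χ, hχ⟩ := exists_hasFiniteFreeResolution_of_hasProjectiveDimensionLE n
      (hasProjectiveDimensionLE_of_pdLE n hn)
    exact isSMulRegular_of_hasFiniteFreeResolution_quotient hx0 hχ
  · exact fun hx => ⟨1, pdLE_one_quotient_span_singleton hx⟩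

/-- Over a Noetherian local ring, a nonzero `x` in the maximal ideal satisfies
`pd_R(R/xR) < ∞` iff `x` is a non zero-divisor. -/
theorem stmt_5 (R : Type u) [CommRing R] [IsNoetherianRing R] [IsLocalRing R]
    (x : R) (hx : x ∈ IsLocalRing.maximalIdeal R) (hx0 : x ≠ 0) :
    (∃ n, pdLE R n (R ⧸ Ideal.span {x})) ↔ IsSMulRegular R x :=
  stmt_5_general R x hx0
end

section
/- Let (R, m) be a commutative Noetherian local ring and M a finitely generated R-module. If there exists a nonzero finitely generated R-module N such that Ext^1_R(M, Ω_R(M ⊗_R N)) = 0, where Ω_R denotes the first syzygy in a projective cover (minimal free presentation), then M is free. -/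
/-!
Pick `x ∈ N` outside `𝔪N` (Nakayama) and an `R`-linear `l : N → R/𝔪` with `l x = 1`.
Since `Ext¹(M, Ω(M ⊗ N)) = 0`, the map `M → M ⊗ N`, `m ↦ m ⊗ x`, lifts along `F ↠ M ⊗ N` to
some `ψ : M → F`. Following `F → M ⊗ N → M ⊗ R/𝔪 ≅ M/𝔪M` (via `id ⊗ l`) gives `ρ` with
`ρ ∘ ψ` the quotient map. Lifting `ρ` to `σ : F → M`, the endomorphism `σ ∘ ψ` is the identity
modulo `𝔪`, hence surjective by Nakayama, hence bijective since `M` is finite. So `M` is a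
direct summand of `F`, i.e. projective, and finite projective modules over a local ring are free.
-/

universe u
open TensorProduct

variable (R : Type u) [CommRing R]

open CategoryTheory Limits

namespace CategoryTheory

variable {R : Type*} [Ring R] {C : Type*} [Category C] [Abelian C] [Linear R C]
  [EnoughProjectives C]

theorem ProjectiveResolution.exists_d_comp_eq_of_isZero_ext_one {X Y : C}
    (P : ProjectiveResolution X)
    (hY : IsZero (((Ext R C 1).obj (Opposite.op X)).obj Y))
    (β : P.complex.X 1 ⟶ Y) (hβ : P.complex.d 2 1 ≫ β = 0) :
    ∃ γ : P.complex.X 0 ⟶ Y, P.complex.d 1 0 ≫ γ = β := by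
  have hexact : (P.complex.linearYonedaObj R Y).ExactAt 1 :=
    (HomologicalComplex.exactAt_iff_isZero_homology _ 1).2 (hY.of_iso (P.isoExt 1 Y).symm)
  rw [HomologicalComplex.exactAt_iff' _ 0 1 2 (by simp) (by simp),
    ShortComplex.moduleCat_exact_iff] at hexact
  exact hexact β hβ

theorem ShortComplex.ShortExact.exists_comp_g_eq_of_isZero_ext_one {S : ShortComplex C}
    (hS : S.ShortExact) {X : C}
    (hext : IsZero (((Ext R C 1).obj (Opposite.op X)).obj S.X₁)) (φ : X ⟶ S.X₃) :
    ∃ ψ : X ⟶ S.X₂, ψ ≫ S.g = φ := by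
  have := hS.epi_g
  have := hS.mono_f
  let P : ProjectiveResolution X := (HasProjectiveResolution.out (Z := X)).some
  let α : P.complex.X 0 ⟶ S.X₂ := Projective.factorThru (P.π.f 0 ≫ φ) S.g
  have hα : α ≫ S.g = P.π.f 0 ≫ φ := Projective.factorThru_comp _ _
  have hdα : (P.complex.d 1 0 ≫ α) ≫ S.g = 0 := by
    rw [Category.assoc, hα]
    exact (P.complex_d_comp_π_f_zero_assoc φ).trans zero_comp
  -- `d ≫ α` is a 1-cocycle with values in `S.X₁`; correcting `α` by its coboundary `γ`
  -- yields a map that factors through `X = coker d`.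
  obtain ⟨β, hβ⟩ : ∃ β, β ≫ S.f = P.complex.d 1 0 ≫ α :=
    ⟨hS.exact.lift _ hdα, hS.exact.lift_f _ _⟩
  obtain ⟨γ, hγ⟩ := P.exists_d_comp_eq_of_isZero_ext_one hext β
    (by simp [← cancel_mono S.f, hβ])
  obtain ⟨ψ, hψ⟩ : ∃ ψ : X ⟶ S.X₂, P.π.f 0 ≫ ψ = α - γ ≫ S.f :=
    ⟨_, (CokernelCofork.IsColimit.desc' P.isColimitCokernelCofork (α - γ ≫ S.f)
      (by rw [Preadditive.comp_sub, ← Category.assoc, hγ, hβ, sub_self])).2⟩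
  refine ⟨ψ, (cancel_epi (P.π.f 0)).1 ?_⟩
  erw [← Category.assoc, hψ]
  simp [hα]

end CategoryTheory

theorem LinearMap.exists_comp_eq_of_extVanish_one {R : Type u} [CommRing R]
    {M F T : Type u} [AddCommGroup M] [Module R M] [AddCommGroup F] [Module R F]
    [AddCommGroup T] [Module R T] {f : F →ₗ[R] T} (hf : Function.Surjective f)
    (hext : ExtVanish R 1 M (LinearMap.ker f)) (φ : M →ₗ[R] T) :
    ∃ ψ : M →ₗ[R] F, f ∘ₗ ψ = φ := by
  obtain ⟨ψ, hψ⟩ := (LinearMap.shortExact_shortComplexKer hf).exists_comp_g_eq_of_isZero_ext_one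
    (R := R) (ModuleCat.isZero_of_subsingleton _) (ModuleCat.ofHom φ)
  exact ⟨ψ.hom, congrArg ModuleCat.Hom.hom hψ⟩

theorem exists_linearMap_quotient_apply_eq_one {R N : Type*} [CommRing R] [AddCommGroup N]
    [Module R N] {I : Ideal R} [I.IsMaximal] {x : N} (hx : x ∉ I • (⊤ : Submodule R N)) :
    ∃ l : N →ₗ[R] R ⧸ I, l x = 1 := by
  let := Ideal.Quotient.field I
  have hx' : (I • ⊤ : Submodule R N).mkQ x ≠ 0 := by
    rwa [Submodule.mkQ_apply, Ne, Submodule.Quotient.mk_eq_zero]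
  obtain ⟨g, hg⟩ := Module.Projective.exists_dual_ne_zero (R ⧸ I) hx'
  exact ⟨((g ((I • ⊤ : Submodule R N).mkQ x))⁻¹ • g).restrictScalars R ∘ₗ
    (I • ⊤ : Submodule R N).mkQ, inv_mul_cancel₀ hg⟩

theorem LinearMap.surjective_of_surjective_mkQ_comp {R M M' : Type*} [CommRing R]
    [AddCommGroup M] [Module R M] [Module.Finite R M] [AddCommGroup M'] [Module R M']
    {I : Ideal R} (hI : I ≤ (⊥ : Ideal R).jacobson) (θ : M' →ₗ[R] M)
    (hθ : Function.Surjective ((I • ⊤ : Submodule R M).mkQ ∘ₗ θ)) :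
    Function.Surjective θ := by
  rw [← LinearMap.range_eq_top]
  refine top_le_iff.mp (Submodule.le_of_le_smul_of_le_jacobson_bot Module.Finite.fg_top hI ?_)
  rw [sup_comm, ← Submodule.comap_map_mkQ, ← LinearMap.range_comp, LinearMap.range_eq_top.mpr hθ,
    Submodule.comap_top]

theorem Module.Projective.of_mkQ_comp_eq {R M F : Type*} [CommRing R]
    [AddCommGroup M] [Module R M] [Module.Finite R M] [AddCommGroup F] [Module R F]
    [Module.Projective R F] {I : Ideal R} (hI : I ≤ (⊥ : Ideal R).jacobson) (ψ : M →ₗ[R] F)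
    (ρ : F →ₗ[R] M ⧸ I • (⊤ : Submodule R M)) (h : ρ ∘ₗ ψ = (I • ⊤ : Submodule R M).mkQ) :
    Module.Projective R M := by
  obtain ⟨σ, hσ⟩ := Module.projective_lifting_property _ ρ (Submodule.mkQ_surjective _)
  have hsurj : Function.Surjective (σ ∘ₗ ψ) := by
    refine LinearMap.surjective_of_surjective_mkQ_comp hI _ ?_
    rw [← LinearMap.comp_assoc, hσ, h]
    exact Submodule.mkQ_surjective _
  let e := LinearEquiv.ofBijective (σ ∘ₗ ψ)
    ⟨OrzechProperty.injective_of_surjective_endomorphism _ hsurj, hsurj⟩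
  exact .of_split ψ (e.symm ∘ₗ σ) (LinearMap.ext e.symm_apply_apply)

theorem stmt_11_general (R : Type u) [CommRing R] [IsLocalRing R]
    (M : Type u) [AddCommGroup M] [Module R M] [Module.Finite R M]
    (h : ∃ (N : Type u) (_ : AddCommGroup N) (_ : Module R N)
      (_ : Module.Finite R N) (_ : Nontrivial N)
      (F : Type u) (_ : AddCommGroup F) (_ : Module R F)
      (_ : Module.Free R F) (_ : Module.Finite R F)
      (f : F →ₗ[R] (M ⊗[R] N)),
      Function.Surjective f ∧
      LinearMap.ker f ≤ (IsLocalRing.maximalIdeal R) • (⊤ : Submodule R F) ∧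
      ExtVanish R 1 M (LinearMap.ker f)) :
    Module.Free R M := by
  obtain ⟨N, _, _, _, _, F, _, _, _, _, f, hf, -, hext⟩ := h
  set 𝔪 := IsLocalRing.maximalIdeal R
  obtain ⟨x, hx⟩ := SetLike.exists_not_mem_of_ne_top (𝔪 • ⊤ : Submodule R N)
    (Submodule.top_ne_ideal_smul_of_le_jacobson_annihilator
      (IsLocalRing.maximalIdeal_le_jacobson _)).symm
  obtain ⟨l, hl⟩ := exists_linearMap_quotient_apply_eq_one hx
  obtain ⟨ψ, hψ⟩ := LinearMap.exists_comp_eq_of_extVanish_one hf hext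
    ((TensorProduct.mk R M N).flip x)
  have : Module.Projective R M := by
    refine .of_mkQ_comp_eq (IsLocalRing.maximalIdeal_le_jacobson ⊥) ψ
      (tensorQuotEquivQuotSMul M 𝔪 ∘ₗ l.lTensor M ∘ₗ f) (LinearMap.ext fun m => ?_)
    have hfψ : f (ψ m) = m ⊗ₜ x := LinearMap.congr_fun hψ m
    simpa [hfψ, hl] using
      (tensorQuotEquivQuotSMul M 𝔪).apply_symm_apply (Submodule.Quotient.mk m)
  exact Module.free_of_flat_of_isLocalRing

/-- If `Ext^1_R(M, Ω(M ⊗ N)) = 0` for some nonzero `N`, where `Ω` is the syzygy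
in a minimal free presentation, then `M` is free. -/
theorem stmt_11 (R : Type u) [CommRing R] [IsNoetherianRing R] [IsLocalRing R]
    (M : Type u) [AddCommGroup M] [Module R M] [Module.Finite R M]
    (h : ∃ (N : Type u) (_ : AddCommGroup N) (_ : Module R N)
      (_ : Module.Finite R N) (_ : Nontrivial N)
      (F : Type u) (_ : AddCommGroup F) (_ : Module R F)
      (_ : Module.Free R F) (_ : Module.Finite R F)
      (f : F →ₗ[R] (M ⊗[R] N)),
      Function.Surjective f ∧
      LinearMap.ker f ≤ (IsLocalRing.maximalIdeal R) • (⊤ : Submodule R F) ∧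
      ExtVanish R 1 M (LinearMap.ker f)) :
    Module.Free R M :=
  stmt_11_general R M h
end

section
/- Let R be a commutative ring, A and B R-modules, and suppose there is an exact sequence 0 → A^{n_r} → ⋯ → A^{n_1} → A^{n_0} → B → 0 of R-modules with n_i ≥ 0. If M is an R-module with Ext^i_R(M, A) = 0 for all i = 1, ..., r+1, then Ext^1_R(M, B) = 0. -/
universe u
open TensorProduct

variable (R : Type u) [CommRing R]

/-!
Dimension shifting: let `K_j ⊆ A^{n_j}` be the image of `A^{n_{j+1}} → A^{n_j}`; the resolution
splits into short exact sequences `0 → K_{j+1} → A^{n_{j+1}} → K_j → 0` and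
`0 → K_0 → A^{n_0} → B → 0`. Since `Ext^i(M, -)` is additive, `Ext^i(M, A^m) = 0` for
`1 ≤ i ≤ r + 1`, and the long exact sequences in the second variable give
`Ext^{j+2}(M, K_j) = 0` by descending induction on `j`, starting from `K_r = 0`. The last
sequence then kills `Ext^1(M, B)`.
-/

open CategoryTheory Limits

section
variable (R : Type*) [Ring R] {C : Type*} [Category C] [Abelian C] [Linear R C]

/-- Mathlib's `Ext` is derived in the first variable; applying `Hom(K, -)` degreewise to a
projective resolution `K` is what yields the long exact sequences in the second variable. -/
def ChainComplex.linearYonedaObjMap {α : Type*} [AddRightCancelSemigroup α] [One α]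
    (K : ChainComplex C α) {Y Z : C} (f : Y ⟶ Z) :
    K.linearYonedaObj R Y ⟶ K.linearYonedaObj R Z where
  f k := ModuleCat.ofHom (Linear.rightComp R _ f)
  comm' i j _ := by
    ext φ
    exact (Category.assoc _ φ f).symm

variable {R}

theorem ChainComplex.shortExact_linearYonedaObjMap {α : Type*} [AddRightCancelSemigroup α]
    [One α] (K : ChainComplex C α) [∀ k, Projective (K.X k)] {S : ShortComplex C}
    (hS : S.ShortExact) :
    (ShortComplex.mk (K.linearYonedaObjMap R S.f) (K.linearYonedaObjMap R S.g) (by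
      ext k φ
      exact (Category.assoc _ _ _).trans ((φ ≫= S.zero).trans comp_zero))).ShortExact := by
  have := hS.mono_f
  have := hS.epi_g
  refine HomologicalComplex.shortExact_of_degreewise_shortExact _ fun k =>
    ModuleCat.shortComplex_shortExact _ ?_ ?_ ?_
  · intro φ
    constructor
    · intro hφ
      exact ⟨hS.exact.liftFromProjective φ hφ, hS.exact.liftFromProjective_comp φ hφ⟩
    · rintro ⟨ψ, rfl⟩
      exact (Category.assoc _ _ _).trans ((ψ ≫= S.zero).trans comp_zero)
  · intro a b hab
    exact (cancel_mono S.f).mp hab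
  · intro ψ
    exact ⟨Projective.factorThru ψ S.g, Projective.factorThru_comp ψ S.g⟩

end

section
variable {R : Type*} [Ring R] {C : Type*} [Category C] [Abelian C] [Linear R C]
  [EnoughProjectives C]

theorem isZero_Ext_of_isZero (X : C) {Y : C} (hY : IsZero Y) (n : ℕ) :
    IsZero (((Ext R C n).obj (Opposite.op X)).obj Y) := by
  refine IsZero.of_iso ?_ ((projectiveResolution X).isoExt n Y)
  refine ShortComplex.isZero_homology_of_isZero_X₂ _ ?_
  exact @ModuleCat.isZero_of_subsingleton _ _ _ ⟨hY.eq_of_tgt⟩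

theorem isZero_Ext_X₃_of_shortExact (X : C) {S : ShortComplex C} (hS : S.ShortExact) (n : ℕ)
    (h₂ : IsZero (((Ext R C n).obj (Opposite.op X)).obj S.X₂))
    (h₁ : IsZero (((Ext R C (n + 1)).obj (Opposite.op X)).obj S.X₁)) :
    IsZero (((Ext R C n).obj (Opposite.op X)).obj S.X₃) := by
  let P := projectiveResolution X
  refine IsZero.of_iso ?_ (P.isoExt n S.X₃)
  refine ((P.complex.shortExact_linearYonedaObjMap hS).homology_exact₃ n (n + 1) rfl).isZero_X₂
    ?_ ?_
  · exact (IsZero.of_iso h₂ (P.isoExt n S.X₂).symm).eq_of_src _ _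
  · exact (IsZero.of_iso h₁ (P.isoExt (n + 1) S.X₁).symm).eq_of_tgt _ _

theorem isZero_Ext_X₂_of_shortExact (X : C) {S : ShortComplex C} (hS : S.ShortExact) (n : ℕ)
    (h₁ : IsZero (((Ext R C n).obj (Opposite.op X)).obj S.X₁))
    (h₃ : IsZero (((Ext R C n).obj (Opposite.op X)).obj S.X₃)) :
    IsZero (((Ext R C n).obj (Opposite.op X)).obj S.X₂) := by
  let P := projectiveResolution X
  refine IsZero.of_iso ?_ (P.isoExt n S.X₂)
  refine ((P.complex.shortExact_linearYonedaObjMap hS).homology_exact₂ n).isZero_X₂ ?_ ?_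
  · exact (IsZero.of_iso h₁ (P.isoExt n S.X₁).symm).eq_of_src _ _
  · exact (IsZero.of_iso h₃ (P.isoExt n S.X₃).symm).eq_of_tgt _ _

end

section
variable {R : Type u} [CommRing R]

theorem exact_single_zero_funLeft_succ (A : Type*) [AddCommGroup A] [Module R A] (m : ℕ) :
    Function.Exact (LinearMap.single R (fun _ : Fin (m + 1) => A) 0)
      (LinearMap.funLeft R A Fin.succ) := by
  intro x
  constructor
  · intro hx
    refine ⟨x 0, funext fun i => Fin.cases ?_ (fun j => ?_) i⟩
    · simp
    · simpa using (congrFun hx j).symm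
  · rintro ⟨a, rfl⟩
    ext j
    simp [LinearMap.funLeft]

theorem isZero_Ext_pi (M : ModuleCat.{u} R) (A : Type u) [AddCommGroup A] [Module R A] {n : ℕ}
    (hA : IsZero (((Ext R (ModuleCat.{u} R) n).obj (Opposite.op M)).obj (ModuleCat.of R A)))
    (m : ℕ) :
    IsZero (((Ext R (ModuleCat.{u} R) n).obj (Opposite.op M)).obj
      (ModuleCat.of R (Fin m → A))) := by
  induction m with
  | zero => exact isZero_Ext_of_isZero M (ModuleCat.isZero_of_subsingleton _) n
  | succ m ih =>
    have hexact := exact_single_zero_funLeft_succ (R := R) A m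
    exact isZero_Ext_X₂_of_shortExact M
      (ModuleCat.shortComplex_shortExact
        (ModuleCat.shortComplexOfCompEqZero _ _ hexact.linearMap_comp_eq_zero) hexact
        (LinearMap.ker_eq_bot.mp (LinearMap.ker_single R _ 0))
        (LinearMap.funLeft_surjective_of_injective _ _ _ (Fin.succ_injective _))) n hA ih

theorem isZero_Ext_one_of_exact {M : ModuleCat.{u} R} {X : ℕ → Type u}
    [∀ i, AddCommGroup (X i)] [∀ i, Module R (X i)] {B : Type u} [AddCommGroup B]
    [Module R B] (r : ℕ) (d : ∀ i, X (i + 1) →ₗ[R] X i) (g : X 0 →ₗ[R] B)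
    (hg : Function.Surjective g)
    (h0 : Function.Exact (d 0) g) (hd : ∀ i, Function.Exact (d (i + 1)) (d i))
    [Subsingleton (X (r + 1))]
    (hX : ∀ i ≤ r, IsZero (((Ext R (ModuleCat.{u} R) (i + 1)).obj (Opposite.op M)).obj
      (ModuleCat.of R (X i)))) :
    IsZero (((Ext R (ModuleCat.{u} R) 1).obj (Opposite.op M)).obj (ModuleCat.of R B)) := by
  have hrange : ∀ j ≤ r, IsZero (((Ext R (ModuleCat.{u} R) (j + 2)).obj (Opposite.op M)).obj
      (ModuleCat.of R (LinearMap.range (d j)))) := by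
    intro j hj
    induction hj using Nat.decreasingInduction with
    | self =>
      have : LinearMap.range (d r) = ⊥ := LinearMap.range_eq_bot.mpr (Subsingleton.elim _ _)
      rw [this]
      exact isZero_Ext_of_isZero M (ModuleCat.isZero_of_subsingleton _) _
    | of_succ j hj ih =>
      refine isZero_Ext_X₃_of_shortExact M
        (LinearMap.shortExact_shortComplexKer (d j).surjective_rangeRestrict) (j + 2)
        (hX (j + 1) hj) ?_
      change IsZero (((Ext R (ModuleCat.{u} R) (j + 3)).obj (Opposite.op M)).obj
        (ModuleCat.of R (LinearMap.ker (d j).rangeRestrict)))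
      rw [LinearMap.ker_rangeRestrict, (hd j).linearMap_ker_eq]
      exact ih
  refine isZero_Ext_X₃_of_shortExact M (LinearMap.shortExact_shortComplexKer hg) 1
    (hX 0 (Nat.zero_le r)) ?_
  change IsZero (((Ext R (ModuleCat.{u} R) 2).obj (Opposite.op M)).obj
    (ModuleCat.of R (LinearMap.ker g)))
  rw [h0.linearMap_ker_eq]
  exact hrange 0 (Nat.zero_le r)

end

/-- Given an exact sequence `0 → A^{n_r} → ⋯ → A^{n_0} → B → 0`, if
`Ext^i(M,A) = 0` for `i = 1,…,r+1`, then `Ext^1(M,B) = 0`. -/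
theorem stmt_12 (R : Type u) [CommRing R]
    (A B M : Type u) [AddCommGroup A] [Module R A] [AddCommGroup B] [Module R B]
    [AddCommGroup M] [Module R M]
    (r : ℕ) (n : ℕ → ℕ) (hn : ∀ i, r < i → n i = 0)
    (d : ∀ i : ℕ, ((Fin (n (i+1)) → A) →ₗ[R] (Fin (n i) → A)))
    (g : (Fin (n 0) → A) →ₗ[R] B)
    (hg : Function.Surjective g)
    (h0 : Function.Exact (d 0) g)
    (hd : ∀ i, Function.Exact (d (i+1)) (d i))
    (hext : ∀ i, 1 ≤ i → i ≤ r + 1 → ExtVanish R i M A) :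
    ExtVanish R 1 M B := by
  have : Subsingleton (Fin (n (r + 1)) → A) := by
    rw [hn (r + 1) r.lt_succ_self]
    infer_instance
  refine ModuleCat.subsingleton_of_isZero
    (isZero_Ext_one_of_exact (X := fun i => Fin (n i) → A) r d g hg h0 hd fun i hi => ?_)
  exact isZero_Ext_pi _ A
    (ModuleCat.isZero_iff_subsingleton.mpr (hext (i + 1) (by omega) (by omega))) _
end
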